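/- arXiv:1212.0976 — 5 statements merged into one kernel-verified Lean document; each statement's English description precedes it below -/
import Mathlib

section
/- Let U be an n×m real matrix and let A be an n×n real symmetric matrix with A ≺ u·Id (i.e. u·Id − A is positive definite), and let u' > u. Assume ψ(A,u) − ψ(A,u') > 0. Let v ∈ ℝⁿ and s > 0, and define F(v) = (vᵗ(u'·Id − A)⁻²v / (ψ(A,u) − ψ(A,u')))·‖U‖² + vᵗ(u'·Id − A)⁻¹v. If F(v) ≤ 1/s, then A + s·vvᵗ ≺ u'·Id and ψ(A + s·vvᵗ, u') ≤ ψ(A, u). -/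
open Matrix
open scoped BigOperators

/-- The operator norm of a matrix viewed as a map `ℓ₂^m → ℓ₂^n`. -/
noncomputable def opNorm {n m : ℕ} (U : Matrix (Fin n) (Fin m) ℝ) : ℝ :=
  ‖LinearMap.toContinuousLinearMap (Matrix.toEuclideanLin U)‖

/-- `ψ(A, u) = Tr (Uᵗ (u·Id − A)⁻¹ U)`. -/
noncomputable def psi {n m : ℕ} (U : Matrix (Fin n) (Fin m) ℝ)
    (A : Matrix (Fin n) (Fin n) ℝ) (u : ℝ) : ℝ :=
  (Uᵀ * (u • 1 - A)⁻¹ * U).trace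

/-!
Put `M = u'·Id − A`, positive definite since `u < u'`. While `s·vᵀM⁻¹v < 1`, Sherman–Morrison gives
`(M − s·vvᵀ)⁻¹ = M⁻¹ + c·wwᵀ` with `w = M⁻¹v` and `c = s / (1 − s·vᵀM⁻¹v) ≥ 0`; this matrix is
positive definite, hence so is its inverse `u'·Id − (A + s·vvᵀ)`. The update raises `ψ(·, u')` by
`c·‖Uᵀw‖² ≤ c·‖U‖²·vᵀM⁻²v`, and `F(v) ≤ 1/s` says precisely that this is at most
`ψ(A,u) − ψ(A,u')`. Finally `ψ(A,u) ≠ ψ(A,u')` forces `U ≠ 0`, so the first summand of `F(v)` is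
positive unless `w = 0`, and `F(v) ≤ 1/s` yields `s·vᵀM⁻¹v < 1`.
-/

open scoped Matrix.Norms.L2Operator

namespace Matrix

variable {n m : Type*}

theorem PosDef.smul_one_sub_of_le [DecidableEq n] {A : Matrix n n ℝ} {u u' : ℝ}
    (hA : (u • 1 - A).PosDef) (hu : u ≤ u') : (u' • 1 - A).PosDef := by
  have : u' • 1 - A = (u • 1 - A) + (u' - u) • 1 := by rw [sub_smul]; abel
  exact this ▸ hA.add_posSemidef (PosSemidef.one.smul (sub_nonneg.mpr hu))

variable [Fintype n] [Fintype m]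

theorem trace_transpose_mul_vecMulVec_self_mul {R : Type*} [CommSemiring R] (U : Matrix n m R)
    (w : n → R) : (Uᵀ * vecMulVec w w * U).trace = (Uᵀ *ᵥ w) ⬝ᵥ (Uᵀ *ᵥ w) := by
  rw [mul_vecMulVec, vecMulVec_mul, trace_vecMulVec, mulVec_transpose]

theorem IsSymm.dotProduct_mul_self_mulVec {R : Type*} [CommSemiring R] {B : Matrix n n R}
    (hB : B.IsSymm) (v : n → R) : v ⬝ᵥ (B * B) *ᵥ v = (B *ᵥ v) ⬝ᵥ (B *ᵥ v) := by
  rw [← mulVec_mulVec, dotProduct_mulVec, ← mulVec_transpose, hB.eq]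

theorem dotProduct_mulVec_self_le_l2_opNorm_sq [DecidableEq n] (B : Matrix m n ℝ) (x : n → ℝ) :
    (B *ᵥ x) ⬝ᵥ (B *ᵥ x) ≤ ‖B‖ ^ 2 * (x ⬝ᵥ x) := by
  calc (B *ᵥ x) ⬝ᵥ (B *ᵥ x) = ‖WithLp.toLp 2 (B *ᵥ x)‖ ^ 2 := by
        rw [EuclideanSpace.real_norm_sq_eq]; simp only [dotProduct, sq]
    _ ≤ (‖B‖ * ‖WithLp.toLp 2 x‖) ^ 2 :=
        pow_le_pow_left₀ (norm_nonneg _) (l2_opNorm_mulVec B (WithLp.toLp 2 x)) 2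
    _ = ‖B‖ ^ 2 * (x ⬝ᵥ x) := by
        rw [mul_pow, EuclideanSpace.real_norm_sq_eq]; simp only [dotProduct, sq]

section ShermanMorrison

variable [DecidableEq n] {K : Type*} [Field K]

theorem sub_smul_vecMulVec_mul_eq_one {M : Matrix n n K} (hM : IsUnit M) (a b : n → K) {s : K}
    (h : s * (b ⬝ᵥ M⁻¹ *ᵥ a) ≠ 1) :
    (M - s • vecMulVec a b) *
      (M⁻¹ + (s / (1 - s * (b ⬝ᵥ M⁻¹ *ᵥ a))) • vecMulVec (M⁻¹ *ᵥ a) (b ᵥ* M⁻¹)) = 1 := by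
  have hMM : M * M⁻¹ = 1 := mul_nonsing_inv M ((isUnit_iff_isUnit_det M).mp hM)
  have hd : 1 - s * (b ⬝ᵥ M⁻¹ *ᵥ a) ≠ 0 := sub_ne_zero.mpr h.symm
  set c := s / (1 - s * (b ⬝ᵥ M⁻¹ *ᵥ a)) with hc
  have hcoef : c - s - s * ((b ⬝ᵥ M⁻¹ *ᵥ a) * c) = 0 := by
    rw [hc]; field_simp; ring
  rw [sub_mul, mul_add, mul_add, hMM, mul_smul_comm, mul_vecMulVec, mulVec_mulVec, hMM,
    one_mulVec, smul_mul_assoc, vecMulVec_mul, smul_mul_assoc, mul_smul_comm,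
    vecMulVec_mul_vecMulVec, vecMulVec_smul]
  calc _ = 1 + (c - s - s * ((b ⬝ᵥ M⁻¹ *ᵥ a) * c)) • vecMulVec a (b ᵥ* M⁻¹) := by module
    _ = 1 := by rw [hcoef, zero_smul, add_zero]

theorem IsSymm.sub_smul_vecMulVec_self_mul_eq_one {M : Matrix n n K} (hM : IsUnit M)
    (hMs : M.IsSymm) (v : n → K) {s : K} (h : s * (v ⬝ᵥ M⁻¹ *ᵥ v) ≠ 1) :
    (M - s • vecMulVec v v) *
      (M⁻¹ + (s / (1 - s * (v ⬝ᵥ M⁻¹ *ᵥ v))) • vecMulVec (M⁻¹ *ᵥ v) (M⁻¹ *ᵥ v)) = 1 := by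
  simpa only [← mulVec_transpose, hMs.inv.eq] using sub_smul_vecMulVec_mul_eq_one hM v v h

theorem IsSymm.trace_mul_inv_sub_smul_vecMulVec_self_mul {M : Matrix n n K} (hM : IsUnit M)
    (hMs : M.IsSymm) (U : Matrix n m K) (v : n → K) {s : K} (h : s * (v ⬝ᵥ M⁻¹ *ᵥ v) ≠ 1) :
    (Uᵀ * (M - s • vecMulVec v v)⁻¹ * U).trace = (Uᵀ * M⁻¹ * U).trace +
      s / (1 - s * (v ⬝ᵥ M⁻¹ *ᵥ v)) * ((Uᵀ *ᵥ (M⁻¹ *ᵥ v)) ⬝ᵥ (Uᵀ *ᵥ (M⁻¹ *ᵥ v))) := by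
  rw [inv_eq_right_inv (hMs.sub_smul_vecMulVec_self_mul_eq_one hM v h), Matrix.mul_add,
    Matrix.add_mul, trace_add, Matrix.mul_smul, Matrix.smul_mul, trace_smul,
    trace_transpose_mul_vecMulVec_self_mul, smul_eq_mul]

end ShermanMorrison

variable [DecidableEq n]

theorem PosDef.sub_smul_vecMulVec_self {M : Matrix n n ℝ} (hM : M.PosDef)
    (v : n → ℝ) {s : ℝ} (hs : 0 ≤ s) (h : s * (v ⬝ᵥ M⁻¹ *ᵥ v) < 1) :
    (M - s • vecMulVec v v).PosDef := by
  have hc : 0 ≤ s / (1 - s * (v ⬝ᵥ M⁻¹ *ᵥ v)) := div_nonneg hs (sub_nonneg.mpr h.le)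
  have hP := hM.inv.add_posSemidef ((posSemidef_vecMulVec_self_star (M⁻¹ *ᵥ v)).smul hc)
  rw [star_trivial] at hP
  have hMs : M.IsSymm := isHermitian_iff_isSymm.mp hM.isHermitian
  rw [← inv_eq_left_inv (hMs.sub_smul_vecMulVec_self_mul_eq_one hM.isUnit v h.ne)]
  exact hP.inv

variable [DecidableEq m] {M : Matrix n n ℝ} {U : Matrix n m ℝ} {v : n → ℝ} {s Δ : ℝ}

theorem IsSymm.mul_dotProduct_inv_mulVec_lt_one (hMs : M.IsSymm) (hU : U ≠ 0) (hs : 0 < s)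
    (hΔ : 0 < Δ) (hF : v ⬝ᵥ (M⁻¹ * M⁻¹) *ᵥ v / Δ * ‖U‖ ^ 2 + v ⬝ᵥ M⁻¹ *ᵥ v ≤ 1 / s) :
    s * (v ⬝ᵥ M⁻¹ *ᵥ v) < 1 := by
  rw [hMs.inv.dotProduct_mul_self_mulVec] at hF
  rcases eq_or_ne (M⁻¹ *ᵥ v) 0 with hw | hw
  · simp [hw]
  have hw_pos : 0 < (M⁻¹ *ᵥ v) ⬝ᵥ (M⁻¹ *ᵥ v) := by
    simpa using dotProduct_star_self_pos_iff.mpr hw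
  have hU_pos : 0 < ‖U‖ := norm_pos_iff.mpr hU
  have : 0 < (M⁻¹ *ᵥ v) ⬝ᵥ (M⁻¹ *ᵥ v) / Δ * ‖U‖ ^ 2 := by positivity
  rw [← lt_div_iff₀' hs]
  linarith

theorem IsSymm.trace_inv_sub_smul_vecMulVec_le (hM : IsUnit M) (hMs : M.IsSymm) (hs : 0 < s)
    (hΔ : 0 < Δ) (hF : v ⬝ᵥ (M⁻¹ * M⁻¹) *ᵥ v / Δ * ‖U‖ ^ 2 + v ⬝ᵥ M⁻¹ *ᵥ v ≤ 1 / s)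
    (hsq : s * (v ⬝ᵥ M⁻¹ *ᵥ v) < 1) :
    (Uᵀ * (M - s • vecMulVec v v)⁻¹ * U).trace ≤ (Uᵀ * M⁻¹ * U).trace + Δ := by
  rw [hMs.inv.dotProduct_mul_self_mulVec] at hF
  set w := M⁻¹ *ᵥ v
  have hUw : (Uᵀ *ᵥ w) ⬝ᵥ (Uᵀ *ᵥ w) ≤ ‖U‖ ^ 2 * (w ⬝ᵥ w) := by
    simpa only [← conjTranspose_eq_transpose_of_trivial, l2_opNorm_conjTranspose] using
      dotProduct_mulVec_self_le_l2_opNorm_sq Uᵀ w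
  have hF' : ‖U‖ ^ 2 * (w ⬝ᵥ w) ≤ (1 / s - v ⬝ᵥ w) * Δ := by
    rw [← div_le_iff₀ hΔ, mul_comm, mul_div_right_comm]
    linarith
  rw [hMs.trace_mul_inv_sub_smul_vecMulVec_self_mul hM U v hsq.ne, add_le_add_iff_left,
    div_mul_eq_mul_div, div_le_iff₀ (sub_pos.mpr hsq)]
  calc s * ((Uᵀ *ᵥ w) ⬝ᵥ (Uᵀ *ᵥ w)) ≤ s * ((1 / s - v ⬝ᵥ w) * Δ) := by
        gcongr; exact hUw.trans hF'
    _ = Δ * (1 - s * (v ⬝ᵥ w)) := by field_simp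

end Matrix

theorem opNorm_eq_l2_opNorm {n m : ℕ} (U : Matrix (Fin n) (Fin m) ℝ) : opNorm U = ‖U‖ := rfl

theorem upper_bound_step_general {n m : ℕ} (U : Matrix (Fin n) (Fin m) ℝ)
    (A : Matrix (Fin n) (Fin n) ℝ)
    (u u' : ℝ) (hpd : (u • 1 - A).PosDef) (hu' : u < u')
    (hΨ : 0 < psi U A u - psi U A u')
    (v : Fin n → ℝ) (s : ℝ) (hs : 0 < s)
    (hF : v ⬝ᵥ (((u' • 1 - A)⁻¹ * (u' • 1 - A)⁻¹) *ᵥ v) / (psi U A u - psi U A u')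
          * opNorm U ^ 2
        + v ⬝ᵥ ((u' • 1 - A)⁻¹ *ᵥ v) ≤ 1 / s) :
    (u' • 1 - (A + s • vecMulVec v v)).PosDef ∧
      psi U (A + s • vecMulVec v v) u' ≤ psi U A u := by
  have hM : (u' • 1 - A).PosDef := hpd.smul_one_sub_of_le hu'.le
  have hMs : (u' • 1 - A).IsSymm := isHermitian_iff_isSymm.mp hM.isHermitian
  have hU : U ≠ 0 := by
    rintro rfl
    simp [psi] at hΨ
  rw [opNorm_eq_l2_opNorm] at hF
  have hsq := hMs.mul_dotProduct_inv_mulVec_lt_one hU hs hΨ hF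
  rw [sub_add_eq_sub_sub]
  refine ⟨hM.sub_smul_vecMulVec_self v hs.le hsq, ?_⟩
  calc psi U (A + s • vecMulVec v v) u'
      = (Uᵀ * (u' • 1 - A - s • vecMulVec v v)⁻¹ * U).trace := by rw [psi, sub_add_eq_sub_sub]
    _ ≤ psi U A u' + (psi U A u - psi U A u') :=
        hMs.trace_inv_sub_smul_vecMulVec_le hM.isUnit hs hΨ hF hsq
    _ = psi U A u := add_sub_cancel _ _

/-- **Lemma 2.2 (upper-bound step).** If `A` is symmetric with `A ≺ u·Id`, `u' > u`,
`ψ(A,u) − ψ(A,u') > 0`, `s > 0` and `F(v) ≤ 1/s` where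
`F(v) = (vᵗ(u'Id−A)⁻²v/(ψ(A,u)−ψ(A,u')))·‖U‖² + vᵗ(u'Id−A)⁻¹v`,
then `A + s·vvᵗ ≺ u'·Id` and `ψ(A+s·vvᵗ, u') ≤ ψ(A, u)`. -/
theorem upper_bound_step {n m : ℕ} (U : Matrix (Fin n) (Fin m) ℝ)
    (A : Matrix (Fin n) (Fin n) ℝ) (hA : A.IsHermitian)
    (u u' : ℝ) (hpd : (u • 1 - A).PosDef) (hu' : u < u')
    (hΨ : 0 < psi U A u - psi U A u')
    (v : Fin n → ℝ) (s : ℝ) (hs : 0 < s)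
    (hF : v ⬝ᵥ (((u' • 1 - A)⁻¹ * (u' • 1 - A)⁻¹) *ᵥ v) / (psi U A u - psi U A u')
          * opNorm U ^ 2
        + v ⬝ᵥ ((u' • 1 - A)⁻¹ *ᵥ v) ≤ 1 / s) :
    (u' • 1 - (A + s • vecMulVec v v)).PosDef ∧
      psi U (A + s • vecMulVec v v) u' ≤ psi U A u :=
  upper_bound_step_general U A u u' hpd hu' hΨ v s hs hF
end

section
/- Let U be an n×m real matrix. (i) Let A be an n×n real symmetric positive semidefinite matrix whose nonzero eigenvalues are all strictly greater than b' > 0, and let Λ > 0. Then for every unit vector v ∈ ℝⁿ: −(vᵗ(A − b'·Id)⁻²v/Λ)·‖U‖² − vᵗ(A − b'·Id)⁻¹v ≤ 1/b'. (ii) Let A be an n×n real symmetric positive semidefinite matrix with A ≺ u'·Id for some u' > 0, and let Ψ > 0. Then for every unit vector v ∈ ℝⁿ: (vᵗ(u'·Id − A)⁻²v/Ψ)·‖U‖² + vᵗ(u'·Id − A)⁻¹v ≥ 1/u'. -/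
/-!
By the continuous functional calculus, `(A - b' • 1)⁻¹ = f(A)` with `f x = (x - b')⁻¹`, and
`f ≥ -1/b'` on the spectrum `{0} ∪ (b', ∞)`, so `(A - b' • 1)⁻¹ ≥ -(1/b') • 1` in the Loewner
order; likewise `(u' • 1 - A)⁻¹ ≥ (1/u') • 1` because `(u' - x)⁻¹ ≥ 1/u'` on `[0, u')`. The terms
carrying `‖U‖²` have the right sign, since the square of a symmetric matrix is positive semidefinite.
-/

open Matrix
open scoped MatrixOrder

namespace Matrix

variable {ι : Type*} [Fintype ι]

lemma le_dotProduct_mulVec_of_smul_one_le [DecidableEq ι] {M : Matrix ι ι ℝ} {c : ℝ}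
    (h : c • 1 ≤ M) {v : ι → ℝ} (hv : ∑ i, v i ^ 2 = 1) : c ≤ v ⬝ᵥ (M *ᵥ v) := by
  have hvv : v ⬝ᵥ v = 1 := by simpa [dotProduct, sq] using hv
  simpa only [star_trivial, sub_mulVec, smul_mulVec, one_mulVec, dotProduct_sub,
    dotProduct_smul, smul_eq_mul, hvv, mul_one, sub_nonneg]
    using (le_iff.mp h).dotProduct_mulVec_nonneg v

lemma IsHermitian.dotProduct_mul_self_mulVec_nonneg {C : Matrix ι ι ℝ} (hC : C.IsHermitian)
    (v : ι → ℝ) : 0 ≤ v ⬝ᵥ ((C * C) *ᵥ v) := by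
  simpa using (hC.eq ▸ posSemidef_conjTranspose_mul_self C).dotProduct_mulVec_nonneg v

variable [DecidableEq ι] {A : Matrix ι ι ℝ}

lemma IsHermitian.cfc_inv_eq_nonsing_inv (hA : A.IsHermitian) {f : ℝ → ℝ}
    (hf : ∀ x ∈ spectrum ℝ A, f x ≠ 0) : cfc (fun x ↦ (f x)⁻¹) A = (cfc f A)⁻¹ := by
  rw [cfc_inv f A hf (A.finite_real_spectrum.continuousOn f), nonsing_inv_eq_ringInverse]

lemma IsHermitian.sub_smul_one_eq_cfc (hA : A.IsHermitian) (c : ℝ) :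
    A - c • 1 = cfc (· - c) A := by
  rw [cfc_sub (fun x ↦ x) (fun _ ↦ c) A, cfc_id' ℝ A, cfc_const c A,
    Algebra.algebraMap_eq_smul_one]

lemma IsHermitian.smul_one_sub_eq_cfc (hA : A.IsHermitian) (c : ℝ) :
    c • 1 - A = cfc (c - ·) A := by
  rw [cfc_sub (fun _ ↦ c) (fun x ↦ x) A, cfc_id' ℝ A, cfc_const c A,
    Algebra.algebraMap_eq_smul_one]

lemma IsHermitian.neg_inv_smul_one_le_inv_sub_smul_one (hA : A.IsHermitian) {b : ℝ} (hb : 0 < b)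
    (h : ∀ x ∈ spectrum ℝ A, x ≠ 0 → b < x) : -b⁻¹ • 1 ≤ (A - b • 1)⁻¹ := by
  have hne : ∀ x ∈ spectrum ℝ A, x - b ≠ 0 := fun x hx ↦ by
    rcases eq_or_ne x 0 with rfl | hx0
    · simpa using hb.ne'
    · exact sub_ne_zero.mpr (h x hx hx0).ne'
  rw [hA.sub_smul_one_eq_cfc, ← hA.cfc_inv_eq_nonsing_inv hne, ← Algebra.algebraMap_eq_smul_one]
  refine algebraMap_le_cfc _ _ A (fun x hx ↦ ?_) (A.finite_real_spectrum.continuousOn _)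
  rcases eq_or_ne x 0 with rfl | hx0
  · simp
  · have : 0 < (x - b)⁻¹ := inv_pos.mpr (sub_pos.mpr (h x hx hx0))
    linarith [inv_pos.mpr hb]

lemma PosSemidef.inv_smul_one_le_inv_smul_one_sub (hA : A.PosSemidef) {u : ℝ}
    (h : (u • 1 - A).PosDef) : u⁻¹ • 1 ≤ (u • 1 - A)⁻¹ := by
  have hlt : ∀ x ∈ spectrum ℝ A, 0 < u - x := fun x hx ↦ by
    refine (isStrictlyPositive_iff_posDef.mpr h).spectrum_pos ?_
    rw [hA.isHermitian.smul_one_sub_eq_cfc, cfc_map_spectrum (u - ·) A]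
    exact ⟨x, hx, rfl⟩
  rw [hA.isHermitian.smul_one_sub_eq_cfc, ← hA.isHermitian.cfc_inv_eq_nonsing_inv
    (fun x hx ↦ (hlt x hx).ne'), ← Algebra.algebraMap_eq_smul_one]
  refine algebraMap_le_cfc _ _ A (fun x hx ↦ ?_) (A.finite_real_spectrum.continuousOn _)
  exact inv_anti₀ (hlt x hx) (by linarith [spectrum_nonneg_of_nonneg hA.nonneg hx])

end Matrix

/-- **Lemma 2.6 (bounds on the quadratic forms at unit vectors).**
(i) If `A` is symmetric PSD with nonzero eigenvalues `> b' > 0` and `Λ > 0`, then for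
every unit vector `v`: `−(vᵗ(A−b'Id)⁻²v/Λ)‖U‖² − vᵗ(A−b'Id)⁻¹v ≤ 1/b'`.
(ii) If `A` is symmetric PSD with `A ≺ u'·Id`, `u' > 0` and `Ψ > 0`, then for every unit
vector `v`: `(vᵗ(u'Id−A)⁻²v/Ψ)‖U‖² + vᵗ(u'Id−A)⁻¹v ≥ 1/u'`. -/
theorem quadratic_form_bounds {n m : ℕ} (U : Matrix (Fin n) (Fin m) ℝ) :
    (∀ (A : Matrix (Fin n) (Fin n) ℝ) (hA : A.PosSemidef) (b' : ℝ), 0 < b' →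
      (∀ i, hA.isHermitian.eigenvalues i ≠ 0 → b' < hA.isHermitian.eigenvalues i) →
      ∀ Λ : ℝ, 0 < Λ → ∀ v : Fin n → ℝ, ∑ i, v i ^ 2 = 1 →
        -(v ⬝ᵥ (((A - b' • 1)⁻¹ * (A - b' • 1)⁻¹) *ᵥ v) / Λ * opNorm U ^ 2)
            - v ⬝ᵥ ((A - b' • 1)⁻¹ *ᵥ v) ≤ 1 / b') ∧
    (∀ A : Matrix (Fin n) (Fin n) ℝ, A.PosSemidef → ∀ u' : ℝ, 0 < u' →
      (u' • 1 - A).PosDef →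
      ∀ Ψ : ℝ, 0 < Ψ → ∀ v : Fin n → ℝ, ∑ i, v i ^ 2 = 1 →
        1 / u' ≤ v ⬝ᵥ (((u' • 1 - A)⁻¹ * (u' • 1 - A)⁻¹) *ᵥ v) / Ψ * opNorm U ^ 2
            + v ⬝ᵥ ((u' • 1 - A)⁻¹ *ᵥ v)) := by
  constructor
  · intro A hA b' hb' hev Λ hΛ v hv
    have hspec : ∀ x ∈ spectrum ℝ A, x ≠ 0 → b' < x := by
      rw [hA.isHermitian.spectrum_real_eq_range_eigenvalues]
      rintro _ ⟨i, rfl⟩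
      exact hev i
    have hinv := le_dotProduct_mulVec_of_smul_one_le
      (hA.isHermitian.neg_inv_smul_one_le_inv_sub_smul_one hb' hspec) hv
    have hsq := (hA.isHermitian.sub (isHermitian_one.smul (.all b'))).inv
      |>.dotProduct_mul_self_mulVec_nonneg v
    have : 0 ≤ v ⬝ᵥ (((A - b' • 1)⁻¹ * (A - b' • 1)⁻¹) *ᵥ v) / Λ * opNorm U ^ 2 := by positivity
    rw [one_div]
    linarith
  · intro A hA u' _ hS Ψ hΨ v hv
    have hinv := le_dotProduct_mulVec_of_smul_one_le (hA.inv_smul_one_le_inv_smul_one_sub hS) hv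
    have hsq := ((isHermitian_one.smul (.all u')).sub hA.isHermitian).inv
      |>.dotProduct_mul_self_mulVec_nonneg v
    have : 0 ≤ v ⬝ᵥ (((u' • 1 - A)⁻¹ * (u' • 1 - A)⁻¹) *ᵥ v) / Ψ * opNorm U ^ 2 := by positivity
    rw [one_div]
    linarith
end

section
/- Let U be an n×m real matrix, A an n×n real symmetric matrix with A ≺ u·Id, and Δ > 0. Then ψ(A, u) − ψ(A, u+Δ) ≥ Δ·Tr(Uᵗ((u+Δ)·Id − A)⁻² U). -/
/-!
With `B = u·Id − A ≻ 0` and `C = B + Δ·Id`, the resolvent identity applied twice gives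
`B⁻¹ − C⁻¹ − Δ·C⁻² = Δ²·C⁻¹B⁻¹C⁻¹`, a congruence of the positive definite `B⁻¹`.
Compressing by `U` and taking traces, the left side becomes `ψ(A,u) − ψ(A,u+Δ) − Δ·Tr(UᵗC⁻²U)`
and the right side is nonnegative.
-/

open Matrix
open scoped BigOperators

namespace Matrix

variable {ι : Type*} [Fintype ι]

theorem PosSemidef.trace_transpose_mul_mul_nonneg {κ : Type*} [Fintype κ] {M : Matrix ι ι ℝ}
    (hM : M.PosSemidef) (U : Matrix ι κ ℝ) : 0 ≤ (Uᵀ * M * U).trace :=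
  (hM.conjTranspose_mul_mul_same U).trace_nonneg

variable [DecidableEq ι]

section CommRing

variable {α : Type*} [CommRing α] {B : Matrix ι ι α} {c : α}

theorem inv_sub_inv_add_smul_one (hB : IsUnit B) (hC : IsUnit (B + c • 1)) :
    B⁻¹ - (B + c • 1)⁻¹ = c • (B⁻¹ * (B + c • 1)⁻¹) := by
  rw [inv_sub_inv (iff_of_true hB hC), add_sub_cancel_left, Matrix.mul_smul, Matrix.mul_one,
    Matrix.smul_mul]

theorem inv_sub_inv_add_smul_one' (hB : IsUnit B) (hC : IsUnit (B + c • 1)) :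
    B⁻¹ - (B + c • 1)⁻¹ = c • ((B + c • 1)⁻¹ * B⁻¹) := by
  rw [← neg_sub, inv_sub_inv (iff_of_true hC hB), sub_add_cancel_left, Matrix.mul_neg,
    Matrix.neg_mul, neg_neg, Matrix.mul_smul, Matrix.mul_one, Matrix.smul_mul]

theorem inv_sub_inv_add_smul_one_sub_smul (hB : IsUnit B) (hC : IsUnit (B + c • 1)) :
    B⁻¹ - (B + c • 1)⁻¹ - c • ((B + c • 1)⁻¹ * (B + c • 1)⁻¹) =
      c ^ 2 • ((B + c • 1)⁻¹ * B⁻¹ * (B + c • 1)⁻¹) := by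
  rw [inv_sub_inv_add_smul_one' hB hC, ← smul_sub, ← Matrix.mul_sub,
    inv_sub_inv_add_smul_one hB hC, Matrix.mul_smul, smul_smul, sq, Matrix.mul_assoc]

end CommRing

theorem PosDef.posSemidef_inv_sub_inv_add_smul_one_sub_smul {B : Matrix ι ι ℝ} (hB : B.PosDef)
    {c : ℝ} (hc : 0 ≤ c) :
    (B⁻¹ - (B + c • 1)⁻¹ - c • ((B + c • 1)⁻¹ * (B + c • 1)⁻¹)).PosSemidef := by
  have hC : (B + c • 1).PosDef := hB.add_posSemidef (PosSemidef.one.smul hc)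
  rw [inv_sub_inv_add_smul_one_sub_smul hB.isUnit hC.isUnit]
  refine PosSemidef.smul ?_ (sq_nonneg c)
  have hcongr := hB.inv.posSemidef.conjTranspose_mul_mul_same (B + c • 1)⁻¹
  rwa [hC.isHermitian.inv.eq] at hcongr

end Matrix

theorem psi_difference_lower_bound_general {n m : ℕ} (U : Matrix (Fin n) (Fin m) ℝ)
    (A : Matrix (Fin n) (Fin n) ℝ)
    (u Δ : ℝ) (hpd : (u • 1 - A).PosDef) (hΔ : 0 < Δ) :
    Δ * (Uᵀ * (((u + Δ) • 1 - A)⁻¹ * ((u + Δ) • 1 - A)⁻¹) * U).trace ≤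
      psi U A u - psi U A (u + Δ) := by
  have hshift : (u + Δ) • 1 - A = (u • 1 - A) + Δ • 1 := by rw [add_smul]; abel
  have key :=
    (hpd.posSemidef_inv_sub_inv_add_smul_one_sub_smul hΔ.le).trace_transpose_mul_mul_nonneg U
  rw [Matrix.mul_sub, Matrix.mul_sub, Matrix.sub_mul, Matrix.sub_mul, Matrix.mul_smul,
    Matrix.smul_mul, trace_sub, trace_sub, trace_smul, smul_eq_mul] at key
  rw [psi, psi, hshift]
  linarith

/-- **Lemma (potential difference bound).** If `A` is symmetric with `A ≺ u·Id` and
`Δ > 0`, then `ψ(A,u) − ψ(A,u+Δ) ≥ Δ·Tr(Uᵗ((u+Δ)Id − A)⁻²U)`. -/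
theorem psi_difference_lower_bound {n m : ℕ} (U : Matrix (Fin n) (Fin m) ℝ)
    (A : Matrix (Fin n) (Fin n) ℝ) (hA : A.IsHermitian)
    (u Δ : ℝ) (hpd : (u • 1 - A).PosDef) (hΔ : 0 < Δ) :
    Δ * (Uᵀ * (((u + Δ) • 1 - A)⁻¹ * ((u + Δ) • 1 - A)⁻¹) * U).trace ≤
      psi U A u - psi U A (u + Δ) :=
  psi_difference_lower_bound_general U A u Δ hpd hΔ
end

section
/- Let U be a nonzero n×m real matrix and A an n×n real symmetric positive semidefinite matrix of rank l whose nonzero eigenvalues are all strictly greater than b > 0. Let δ > 0 with b' = b − δ > 0, let Q be the orthogonal projection onto the kernel of A, and assume the invariant b ≤ δ·‖QU‖_HS²/‖U‖² and that Λ := φ(A,b) − φ(A,b') > 0. Define for v ∈ ℝⁿ: G(v) = −(vᵗ(A − b'·Id)⁻²v/Λ)·‖U‖² − vᵗ(A − b'·Id)⁻¹v. Then Σ_{j≤m} G(Ue_j) ≥ −‖U‖²/δ − φ(A,b). -/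
open Matrix
open scoped BigOperators

/-- The square of the Hilbert–Schmidt (Frobenius) norm of a matrix. -/
noncomputable def frobSq {n m : ℕ} (U : Matrix (Fin n) (Fin m) ℝ) : ℝ :=
  ∑ i, ∑ j, (U i j) ^ 2

/-- `φ(A, b) = Tr (Uᵗ (A − b·Id)⁻¹ U)`. -/
noncomputable def phi {n m : ℕ} (U : Matrix (Fin n) (Fin m) ℝ)
    (A : Matrix (Fin n) (Fin n) ℝ) (b : ℝ) : ℝ :=
  (Uᵀ * (A - b • 1)⁻¹ * U).trace

/-!
Diagonalising `A`, every quantity becomes a sum over the eigenvalues `λᵢ` weighted by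
`cᵢ = ∑ⱼ ⟪wᵢ, U eⱼ⟫²` (`wᵢ` the eigenvectors), and `‖QU‖_HS²` is the weight of the eigenvalue `0`.
Put `b' = b - δ` and `w(λ) = (λ - b)⁻¹ - (λ - b')⁻¹ ≥ 0`, so that `Λ = ∑ w(λᵢ) cᵢ`, and let `s ≤ Λ`
be the part of this sum with `λᵢ = 0`; the invariant reads `‖U‖² ≤ b' s`. Since `δ (λ - b')⁻² ≤ w(λ)`
for `λ > b` and `= (1 + δ / b') w(0)` at `λ = 0`, the numerator `T = ∑ (λᵢ - b')⁻² cᵢ` satisfies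
`δ T ‖U‖² ≤ (Λ + δ s / b') ‖U‖² ≤ Λ ‖U‖² + δ s² ≤ Λ ‖U‖² + δ Λ²`; divide by `δ Λ`.
-/

namespace Matrix
variable {n m R : Type*} [Fintype n] [Fintype m] [CommSemiring R]

theorem trace_transpose_mul_diagonal_mul [DecidableEq n] (V : Matrix n m R) (d : n → R) :
    (Vᵀ * diagonal d * V).trace = ∑ i, d i * ∑ j, V i j ^ 2 := by
  simp only [trace, diag_apply, mul_apply, transpose_apply, diagonal_apply, mul_ite, mul_zero,
    Finset.sum_ite_eq', Finset.mem_univ, ↓reduceIte, Finset.mul_sum]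
  rw [Finset.sum_comm]
  exact Finset.sum_congr rfl fun i _ => Finset.sum_congr rfl fun j _ => by ring

theorem sum_dotProduct_mulVec_col (U : Matrix n m R) (M : Matrix n n R) :
    ∑ j, (fun i => U i j) ⬝ᵥ (M *ᵥ fun i => U i j) = (Uᵀ * M * U).trace := by
  simp only [trace, diag, mul_apply, transpose_apply, dotProduct, mulVec, Finset.mul_sum,
    Finset.sum_mul]
  refine Finset.sum_congr rfl fun j _ => ?_
  rw [Finset.sum_comm]
  exact Finset.sum_congr rfl fun i _ => Finset.sum_congr rfl fun k _ => by ring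

theorem IsHermitian.dotProduct_mulVec_comm {M : Matrix n n ℝ} (hM : M.IsHermitian)
    (x y : n → ℝ) : x ⬝ᵥ M *ᵥ y = y ⬝ᵥ M *ᵥ x := by
  simpa [← conjTranspose_eq_transpose_of_trivial, hM.eq] using dotProduct_transpose_mulVec M x y

theorem mulVec_eq_ite_smul_of_proj_ker {A Q : Matrix n n ℝ} (hA : A.IsHermitian)
    (hQ : Q.IsHermitian) (hQQ : Q * Q = Q) (hker : ∀ x, A *ᵥ x = 0 ↔ Q *ᵥ x = x)
    {μ : ℝ} {w : n → ℝ} (hw : A *ᵥ w = μ • w) :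
    Q *ᵥ w = (if μ = 0 then 1 else 0 : ℝ) • w := by
  by_cases hμ : μ = 0
  · rw [if_pos hμ, one_smul, ← hker, hw, hμ, zero_smul]
  rw [if_neg hμ, zero_smul]
  have hQw : Q *ᵥ (Q *ᵥ w) = Q *ᵥ w := by rw [mulVec_mulVec, hQQ]
  -- `Q w ∈ ker A` is orthogonal to an eigenvector of a nonzero eigenvalue.
  have horth : w ⬝ᵥ Q *ᵥ w = 0 := by
    have h := hA.dotProduct_mulVec_comm (Q *ᵥ w) w
    rw [(hker _).mpr hQw, dotProduct_zero, hw, dotProduct_smul, dotProduct_comm,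
      smul_eq_mul] at h
    exact (mul_eq_zero.mp h).resolve_left hμ
  apply dotProduct_self_eq_zero.mp
  rw [hQ.dotProduct_mulVec_comm, hQw, horth]

end Matrix

namespace Matrix.IsHermitian
variable {n m : Type*} [Fintype n] [DecidableEq n] [Fintype m] {A : Matrix n n ℝ}
  (hA : A.IsHermitian)

theorem cfc_mul (f g : ℝ → ℝ) : hA.cfc f * hA.cfc g = hA.cfc (f * g) := by
  simp only [IsHermitian.cfc, ← map_mul, diagonal_mul_diagonal]
  rfl

theorem cfc_sub_const (c : ℝ) : hA.cfc (fun x => x - c) = A - c • 1 := by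
  conv_rhs => rw [hA.spectral_theorem]
  rw [IsHermitian.cfc, ← map_one (Unitary.conjStarAlgAut ℝ (Matrix n n ℝ) hA.eigenvectorUnitary),
    ← map_smul, ← map_sub]
  congr 1
  ext i j
  by_cases h : i = j <;> simp [h]

theorem cfc_eq_one {f : ℝ → ℝ} (hf : ∀ i, f (hA.eigenvalues i) = 1) : hA.cfc f = 1 := by
  rw [IsHermitian.cfc]
  convert map_one (Unitary.conjStarAlgAut ℝ (Matrix n n ℝ) hA.eigenvectorUnitary)
  rw [← diagonal_one]
  congr 1
  ext i
  simp [hf]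

theorem inv_sub_smul_one {c : ℝ} (hc : ∀ i, hA.eigenvalues i ≠ c) :
    (A - c • 1)⁻¹ = hA.cfc (fun x => (x - c)⁻¹) := by
  refine inv_eq_left_inv ?_
  rw [← hA.cfc_sub_const, cfc_mul]
  exact hA.cfc_eq_one fun i => inv_mul_cancel₀ (sub_ne_zero.mpr (hc i))

theorem eq_cfc_of_proj_ker {Q : Matrix n n ℝ} (hQ : Q.IsHermitian) (hQQ : Q * Q = Q)
    (hker : ∀ x, A *ᵥ x = 0 ↔ Q *ᵥ x = x) :
    Q = hA.cfc (fun x => if x = 0 then 1 else 0) := by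
  have hQW : Q * (hA.eigenvectorUnitary : Matrix n n ℝ) =
      (hA.eigenvectorUnitary : Matrix n n ℝ) *
        diagonal ((fun x => if x = 0 then 1 else 0) ∘ hA.eigenvalues) := by
    ext k i
    have := congrFun (mulVec_eq_ite_smul_of_proj_ker hA hQ hQQ hker
      (hA.mulVec_eigenvectorBasis i)) k
    rw [mul_diagonal, mul_apply]
    simpa [mulVec, dotProduct, mul_comm] using this
  rw [IsHermitian.cfc, RCLike.ofReal_real_eq_id, Function.id_comp, Unitary.conjStarAlgAut_apply,
    ← hQW, Matrix.mul_assoc, Unitary.mul_star_self_of_mem (SetLike.coe_mem _), Matrix.mul_one]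

noncomputable def spectralWeight (U : Matrix n m ℝ) (i : n) : ℝ :=
  ∑ j, ((star (hA.eigenvectorUnitary : Matrix n n ℝ) * U) i j) ^ 2

theorem spectralWeight_nonneg (U : Matrix n m ℝ) (i : n) : 0 ≤ hA.spectralWeight U i :=
  Finset.sum_nonneg fun _ _ => sq_nonneg _

theorem trace_transpose_mul_cfc_mul (U : Matrix n m ℝ) (f : ℝ → ℝ) :
    (Uᵀ * hA.cfc f * U).trace = ∑ i, f (hA.eigenvalues i) * hA.spectralWeight U i := by
  have hW : star (hA.eigenvectorUnitary : Matrix n n ℝ) =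
      (hA.eigenvectorUnitary : Matrix n n ℝ)ᵀ := by
    rw [star_eq_conjTranspose, conjTranspose_eq_transpose_of_trivial]
  have : Uᵀ * hA.cfc f * U = (star (hA.eigenvectorUnitary : Matrix n n ℝ) * U)ᵀ *
      diagonal (f ∘ hA.eigenvalues) * (star (hA.eigenvectorUnitary : Matrix n n ℝ) * U) := by
    simp [IsHermitian.cfc, hW, transpose_mul, Matrix.mul_assoc]
  rw [this, trace_transpose_mul_diagonal_mul]
  rfl

end Matrix.IsHermitian

section ResolventGap
variable {b δ x : ℝ}

theorem inv_sub_sub_inv_sub_zero (hb : b ≠ 0) (hb' : b - δ ≠ 0) :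
    ((0 : ℝ) - b)⁻¹ - (0 - (b - δ))⁻¹ = δ / (b * (b - δ)) := by
  field_simp
  ring

theorem inv_sub_sub_inv_sub_nonneg (hδ : 0 < δ) (hb' : 0 < b - δ) (hx : x = 0 ∨ b < x) :
    0 ≤ (x - b)⁻¹ - (x - (b - δ))⁻¹ := by
  rcases hx with rfl | hx
  · rw [inv_sub_sub_inv_sub_zero (by linarith) hb'.ne']
    have : 0 < b := by linarith
    positivity
  · exact sub_nonneg.mpr (inv_anti₀ (by linarith) (by linarith))

theorem mul_inv_sub_sq_le (hδ : 0 < δ) (hb' : 0 < b - δ) (hx : x = 0 ∨ b < x) :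
    δ * (x - (b - δ))⁻¹ ^ 2 ≤ (x - b)⁻¹ - (x - (b - δ))⁻¹ +
      δ / (b - δ) * ((if x = 0 then 1 else 0) * ((x - b)⁻¹ - (x - (b - δ))⁻¹)) := by
  rcases hx with rfl | hx
  · rw [if_pos rfl, one_mul, inv_sub_sub_inv_sub_zero (by linarith) hb'.ne']
    have : b ≠ 0 := by linarith
    have := hb'.ne'
    apply le_of_eq
    field_simp
    ring
  · rw [if_neg (by linarith), zero_mul, mul_zero, add_zero,
      inv_sub_inv (by linarith) (by linarith), sub_sub_sub_cancel_left, sub_sub_cancel,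
      inv_pow, ← div_eq_mul_inv]
    exact div_le_div_of_nonneg_left hδ.le (by nlinarith) (by nlinarith)

end ResolventGap

theorem div_mul_le_div_add_of_le {δ b' s t Λ T : ℝ} (hδ : 0 < δ) (hb' : 0 < b') (hΛ : 0 < Λ)
    (ht : 0 ≤ t) (hts : t ≤ b' * s) (hsΛ : s ≤ Λ) (hT : δ * T ≤ Λ + δ / b' * s) :
    T / Λ * t ≤ t / δ + Λ := by
  have hs : 0 ≤ s := by nlinarith
  have key : δ * T * t ≤ Λ * t + δ * Λ * Λ :=
    calc δ * T * t ≤ (Λ + δ / b' * s) * t := mul_le_mul_of_nonneg_right hT ht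
      _ = Λ * t + δ * s * (t / b') := by ring
      _ ≤ Λ * t + δ * s * s := by
        gcongr
        rwa [div_le_iff₀' hb']
      _ ≤ Λ * t + δ * Λ * Λ := by gcongr
  rw [div_mul_eq_mul_div, div_le_iff₀ hΛ, div_add' _ _ _ hδ.ne', div_mul_eq_mul_div,
    le_div_iff₀ hδ]
  linarith

theorem sum_G_lower_bound_diagonal {ι : Type*} [Fintype ι] {lam c : ι → ℝ} {b δ t : ℝ}
    (hc : ∀ i, 0 ≤ c i) (hlam : ∀ i, lam i = 0 ∨ b < lam i) (hδ : 0 < δ) (hb' : 0 < b - δ)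
    (ht0 : 0 ≤ t) (ht : b * t ≤ δ * ∑ i, (if lam i = 0 then 1 else 0) * c i)
    (hΛ : 0 < ∑ i, (lam i - b)⁻¹ * c i - ∑ i, (lam i - (b - δ))⁻¹ * c i) :
    -(t / δ) - ∑ i, (lam i - b)⁻¹ * c i ≤
      -((∑ i, (lam i - (b - δ))⁻¹ ^ 2 * c i) /
          (∑ i, (lam i - b)⁻¹ * c i - ∑ i, (lam i - (b - δ))⁻¹ * c i) * t)
        - ∑ i, (lam i - (b - δ))⁻¹ * c i := by
  have hb : 0 < b := by linarith
  set w : ι → ℝ := fun i => (lam i - b)⁻¹ - (lam i - (b - δ))⁻¹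
  set Λ := ∑ i, (lam i - b)⁻¹ * c i - ∑ i, (lam i - (b - δ))⁻¹ * c i
  have hΛw : Λ = ∑ i, w i * c i := by
    simp only [Λ, w, sub_mul, Finset.sum_sub_distrib]
  set s := ∑ i, (if lam i = 0 then 1 else 0) * w i * c i
  have hs : (b - δ) * s = δ / b * ∑ i, (if lam i = 0 then 1 else 0) * c i := by
    simp only [s, Finset.mul_sum]
    refine Finset.sum_congr rfl fun i _ => ?_
    split_ifs with h
    · simp only [w, h, inv_sub_sub_inv_sub_zero hb.ne' hb'.ne']
      field_simp
    · ring
  have hts : t ≤ (b - δ) * s := by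
    rw [hs, div_mul_eq_mul_div, le_div_iff₀' hb]
    exact ht
  have hsΛ : s ≤ Λ := by
    rw [hΛw]
    refine Finset.sum_le_sum fun i _ => ?_
    have := mul_nonneg (inv_sub_sub_inv_sub_nonneg hδ hb' (hlam i)) (hc i)
    split_ifs <;> linarith
  have hT : δ * ∑ i, (lam i - (b - δ))⁻¹ ^ 2 * c i ≤ Λ + δ / (b - δ) * s := by
    simp only [hΛw, s, Finset.mul_sum, ← Finset.sum_add_distrib]
    refine Finset.sum_le_sum fun i _ => ?_
    have := mul_le_mul_of_nonneg_right (mul_inv_sub_sq_le hδ hb' (hlam i)) (hc i)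
    simp only [w]
    linarith
  have := div_mul_le_div_add_of_le hδ hb' hΛ ht0 hts hsΛ hT
  linarith

theorem frobSq_eq_trace {p q : ℕ} (M : Matrix (Fin p) (Fin q) ℝ) :
    frobSq M = (Mᵀ * M).trace := by
  simp only [frobSq, trace, diag, mul_apply, transpose_apply, sq]
  exact Finset.sum_comm

theorem frobSq_mul_eq_trace {n m : ℕ} {Q : Matrix (Fin n) (Fin n) ℝ} (hQ : Q.IsHermitian)
    (hQQ : Q * Q = Q) (U : Matrix (Fin n) (Fin m) ℝ) : frobSq (Q * U) = (Uᵀ * Q * U).trace := by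
  rw [frobSq_eq_trace, transpose_mul, ← conjTranspose_eq_transpose_of_trivial Q, hQ.eq,
    Matrix.mul_assoc, ← Matrix.mul_assoc Q, hQQ, Matrix.mul_assoc]

theorem phi_eq_sum {n m : ℕ} (U : Matrix (Fin n) (Fin m) ℝ) {A : Matrix (Fin n) (Fin n) ℝ}
    (hA : A.IsHermitian) {x : ℝ} (hx : ∀ i, hA.eigenvalues i ≠ x) :
    phi U A x = ∑ i, (hA.eigenvalues i - x)⁻¹ * hA.spectralWeight U i := by
  rw [phi, hA.inv_sub_smul_one hx, hA.trace_transpose_mul_cfc_mul]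

theorem sum_G_lower_bound_general {n m : ℕ} (U : Matrix (Fin n) (Fin m) ℝ)
    (A : Matrix (Fin n) (Fin n) ℝ) (hA : A.PosSemidef)
    (b δ : ℝ) (hδ : 0 < δ) (hb' : 0 < b - δ)
    (heig : ∀ i, hA.isHermitian.eigenvalues i ≠ 0 → b < hA.isHermitian.eigenvalues i)
    (Q : Matrix (Fin n) (Fin n) ℝ) (hQsym : Q.IsHermitian) (hQproj : Q * Q = Q)
    (hQker : ∀ x : Fin n → ℝ, A *ᵥ x = 0 ↔ Q *ᵥ x = x)
    (hinv : b ≤ δ * frobSq (Q * U) / opNorm U ^ 2)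
    (hΛ : 0 < phi U A b - phi U A (b - δ)) :
    -(opNorm U ^ 2 / δ) - phi U A b ≤
      ∑ j, (-((fun i => U i j) ⬝ᵥ (((A - (b - δ) • 1)⁻¹ * (A - (b - δ) • 1)⁻¹) *ᵥ
            (fun i => U i j)) / (phi U A b - phi U A (b - δ)) * opNorm U ^ 2)
        - (fun i => U i j) ⬝ᵥ ((A - (b - δ) • 1)⁻¹ *ᵥ (fun i => U i j))) := by
  have hH := hA.isHermitian
  have hspec : ∀ i, hH.eigenvalues i = 0 ∨ b < hH.eigenvalues i :=
    fun i => or_iff_not_imp_left.mpr (heig i)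
  have hgap : ∀ x, 0 < x → x ≤ b → ∀ i, hH.eigenvalues i ≠ x := fun x hx hxb i h => by
    rcases hspec i with h0 | h0 <;> linarith
  have hbδ : ∀ i, hH.eigenvalues i ≠ b - δ := hgap _ hb' (by linarith)
  have ht : 0 < opNorm U ^ 2 := by
    refine (sq_nonneg _).lt_of_ne fun h => ?_
    rw [← h, div_zero] at hinv
    linarith
  rw [le_div_iff₀ ht, frobSq_mul_eq_trace hQsym hQproj,
    hH.eq_cfc_of_proj_ker hQsym hQproj hQker,
    hH.trace_transpose_mul_cfc_mul] at hinv
  rw [Finset.sum_sub_distrib, Finset.sum_neg_distrib, ← Finset.sum_mul, ← Finset.sum_div,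
    sum_dotProduct_mulVec_col, sum_dotProduct_mulVec_col, ← phi, hH.inv_sub_smul_one hbδ,
    hH.cfc_mul, hH.trace_transpose_mul_cfc_mul]
  rw [phi_eq_sum U hH (hgap b (by linarith) le_rfl), phi_eq_sum U hH hbδ] at hΛ ⊢
  simpa only [Pi.mul_apply, ← sq] using sum_G_lower_bound_diagonal
    (hH.spectralWeight_nonneg U) hspec hδ hb' ht.le hinv hΛ

/-- **Lemma (average of `G` over the columns).** Let `A` be symmetric PSD of rank `l`
with nonzero eigenvalues `> b > 0`, let `b' = b − δ > 0` with `δ > 0`, let `Q` be the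
orthogonal projection onto `ker A`, and assume `b ≤ δ‖QU‖_HS²/‖U‖²` and
`Λ = φ(A,b) − φ(A,b') > 0`. Then `∑_j G(Ue_j) ≥ −‖U‖²/δ − φ(A,b)` where
`G(v) = −(vᵗ(A−b'Id)⁻²v/Λ)‖U‖² − vᵗ(A−b'Id)⁻¹v`. -/
theorem sum_G_lower_bound {n m l : ℕ} (U : Matrix (Fin n) (Fin m) ℝ) (hU : U ≠ 0)
    (A : Matrix (Fin n) (Fin n) ℝ) (hA : A.PosSemidef) (hrank : A.rank = l)
    (b δ : ℝ) (hb : 0 < b) (hδ : 0 < δ) (hb' : 0 < b - δ)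
    (heig : ∀ i, hA.isHermitian.eigenvalues i ≠ 0 → b < hA.isHermitian.eigenvalues i)
    (Q : Matrix (Fin n) (Fin n) ℝ) (hQsym : Q.IsHermitian) (hQproj : Q * Q = Q)
    (hQker : ∀ x : Fin n → ℝ, A *ᵥ x = 0 ↔ Q *ᵥ x = x)
    (hinv : b ≤ δ * frobSq (Q * U) / opNorm U ^ 2)
    (hΛ : 0 < phi U A b - phi U A (b - δ)) :
    -(opNorm U ^ 2 / δ) - phi U A b ≤
      ∑ j, (-((fun i => U i j) ⬝ᵥ (((A - (b - δ) • 1)⁻¹ * (A - (b - δ) • 1)⁻¹) *ᵥ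
            (fun i => U i j)) / (phi U A b - phi U A (b - δ)) * opNorm U ^ 2)
        - (fun i => U i j) ⬝ᵥ ((A - (b - δ) • 1)⁻¹ *ᵥ (fun i => U i j))) :=
  sum_G_lower_bound_general U A hA b δ hδ hb' heig Q hQsym hQproj hQker hinv hΛ
end

section
/- Let T be a nonzero n×n complex Hermitian matrix with zero diagonal (⟨Te_i, e_i⟩ = 0 for all i). Then A = T + ‖T‖·Id is positive semidefinite, and its positive semidefinite square root U = A^{1/2} satisfies ‖Ue_i‖₂² = ‖T‖ for every i ∈ {1,…,n}, and ‖U‖² ≤ 2‖T‖. -/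
open Matrix
open scoped BigOperators ComplexOrder

/-- The operator norm of a complex matrix viewed as a map `ℓ₂ → ℓ₂`. -/
noncomputable def opNormC {k l : Type*} [Fintype k] [Fintype l] [DecidableEq l]
    (M : Matrix k l ℂ) : ℝ :=
  ‖LinearMap.toContinuousLinearMap (Matrix.toEuclideanLin M)‖

/-- The positive semidefinite square root of a positive semidefinite matrix
(the definition `Matrix.PosSemidef.sqrt` of the older Mathlib, since removed). -/
noncomputable def Matrix.PosSemidef.sqrt {n 𝕜 : Type*} [Fintype n] [RCLike 𝕜] [DecidableEq n]
    {A : Matrix n n 𝕜} (hA : A.PosSemidef) : Matrix n n 𝕜 :=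
  hA.1.eigenvectorUnitary.1 * diagonal ((↑) ∘ (√·) ∘ hA.1.eigenvalues) *
    (star hA.1.eigenvectorUnitary : Matrix n n 𝕜)


/-! Since `-‖T‖ ≤ T ≤ ‖T‖` in the C⋆-algebra order, `0 ≤ A ≤ 2‖T‖`, hence
`‖U‖² = ‖A‖ ≤ 2‖T‖`. The squared norm of the `i`-th column of `U` is `(U⋆U)ᵢᵢ = Aᵢᵢ`, which is
`‖T‖` because `T` has zero diagonal. -/

section CStarAlgebra

variable {A : Type*} [CStarAlgebra A] [PartialOrder A] [StarOrderedRing A] {a : A}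

lemma IsSelfAdjoint.nonneg_add_algebraMap_norm (ha : IsSelfAdjoint a) :
    0 ≤ a + algebraMap ℝ A ‖a‖ := by
  simpa [neg_le_iff_add_nonneg] using ha.neg_algebraMap_norm_le_self

lemma IsSelfAdjoint.norm_sqrt_add_algebraMap_norm_sq_le (ha : IsSelfAdjoint a) :
    ‖CFC.sqrt (a + algebraMap ℝ A ‖a‖)‖ ^ 2 ≤ 2 * ‖a‖ := by
  have hb := ha.nonneg_add_algebraMap_norm
  rw [CFC.norm_sqrt _ hb, Real.sq_sqrt (norm_nonneg _),
    CStarAlgebra.norm_le_iff_le_algebraMap _ (by positivity) hb, two_mul, map_add]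
  gcongr
  exact ha.le_algebraMap_norm_self

end CStarAlgebra

open scoped MatrixOrder Matrix.Norms.L2Operator

namespace Matrix

variable {m n 𝕜 : Type*} [RCLike 𝕜]

lemma conjTranspose_mul_self_apply_self [Fintype m] (M : Matrix m n 𝕜) (i : n) :
    (Mᴴ * M) i i = ((∑ k, ‖M k i‖ ^ 2 : ℝ) : 𝕜) := by
  simp [mul_apply, RCLike.conj_mul]

variable [Fintype n] [DecidableEq n] {A : Matrix n n 𝕜}

lemma PosSemidef.sqrt_eq_cfcSqrt (hA : A.PosSemidef) : hA.sqrt = CFC.sqrt A := by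
  rw [CFC.sqrt_eq_real_sqrt A hA.nonneg, cfcₙ_eq_cfc, hA.1.cfc_eq]
  rfl

lemma PosSemidef.sqrt_conjTranspose_mul_self (hA : A.PosSemidef) :
    hA.sqrtᴴ * hA.sqrt = A := by
  rw [hA.sqrt_eq_cfcSqrt, ← star_eq_conjTranspose, (CFC.sqrt_nonneg A).isSelfAdjoint.star_eq,
    CFC.sqrt_mul_sqrt_self A hA.nonneg]

lemma PosSemidef.sum_norm_sqrt_apply_sq (hA : A.PosSemidef) (i : n) :
    ((∑ k, ‖hA.sqrt k i‖ ^ 2 : ℝ) : 𝕜) = A i i := by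
  rw [← conjTranspose_mul_self_apply_self, hA.sqrt_conjTranspose_mul_self]

end Matrix

theorem shifted_hermitian_sqrt_general {n : ℕ} (T : Matrix (Fin n) (Fin n) ℂ)
    (hT : T.IsHermitian) (hdiag : ∀ i, T i i = 0) :
    ∃ hA : (T + (opNormC T : ℂ) • (1 : Matrix (Fin n) (Fin n) ℂ)).PosSemidef,
      (∀ i, ∑ k, ‖hA.sqrt k i‖ ^ 2 = opNormC T) ∧
      opNormC hA.sqrt ^ 2 ≤ 2 * opNormC T := by
  have hshift : T + (opNormC T : ℂ) • 1 = T + algebraMap ℝ _ ‖T‖ := by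
    rw [Algebra.algebraMap_eq_smul_one, Complex.coe_smul]; rfl
  have hA := hshift ▸ hT.isSelfAdjoint.nonneg_add_algebraMap_norm.posSemidef
  refine ⟨hA, fun i => ?_, ?_⟩
  · have hdiagA : (T + (opNormC T : ℂ) • 1) i i = opNormC T := by simp [hdiag]
    exact RCLike.ofReal_injective ((hA.sum_norm_sqrt_apply_sq i).trans hdiagA)
  · rw [hA.sqrt_eq_cfcSqrt, hshift]
    exact hT.isSelfAdjoint.norm_sqrt_add_algebraMap_norm_sq_le

/-- Let `T` be a nonzero Hermitian matrix with zero diagonal. Then `A = T + ‖T‖·Id` is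
positive semidefinite, its PSD square root `U = A^{1/2}` has all columns of squared
Euclidean norm `‖T‖`, and `‖U‖² ≤ 2‖T‖`. -/
theorem shifted_hermitian_sqrt {n : ℕ} (T : Matrix (Fin n) (Fin n) ℂ)
    (hT : T.IsHermitian) (hT0 : T ≠ 0) (hdiag : ∀ i, T i i = 0) :
    ∃ hA : (T + (opNormC T : ℂ) • (1 : Matrix (Fin n) (Fin n) ℂ)).PosSemidef,
      (∀ i, ∑ k, ‖hA.sqrt k i‖ ^ 2 = opNormC T) ∧
      opNormC hA.sqrt ^ 2 ≤ 2 * opNormC T :=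
  shifted_hermitian_sqrt_general T hT hdiag
end
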